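/- arXiv:2605.13608 — 2 statements merged into one kernel-verified Lean document; each statement's English description precedes it below -/
import Mathlib

section
/- Let X be a countable set and d a ℚ^{≥0}-valued ultrametric on X. Then there exists an isometric embedding of X into V_ℚ, i.e., an injective map e : X → V_ℚ with d(e(x), e(y)) = d(x, y) for all x, y ∈ X. (Thus V_ℚ, a concrete representation of the countable rational Urysohn ultrametric space, is universal for countable ℚ^{≥0}-valued ultrametric spaces.) -/
open scoped NNRat

noncomputable section

/-- The positive rationals, as a subtype of `ℚ≥0`. -/
abbrev Qpos : Type := {q : ℚ≥0 // 0 < q}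

/-- The support of `f : Qpos → S` relative to the distinguished element `s₀`. -/
def VSupp {S : Type*} (s₀ : S) (f : Qpos → S) : Set Qpos := {r | f r ≠ s₀}

/-- `V_S`: functions `ℚ^{>0} → S` with finite support. -/
def VS (S : Type*) (s₀ : S) : Type _ := {f : Qpos → S // (VSupp s₀ f).Finite}

open Classical in
/-- The `ℚ≥0`-valued ultrametric: the greatest coordinate at which `f` and `g`
differ, and `0` if there is none (in particular `qdist f f = 0`). -/
def qdist {S : Type*} (f g : Qpos → S) : ℚ≥0 :=
  if h : ∃ m : ℚ≥0, IsGreatest {r : ℚ≥0 | ∃ hr : 0 < r, f ⟨r, hr⟩ ≠ g ⟨r, hr⟩} m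
  then h.choose else 0


/-- A `ℚ≥0`-valued ultrametric on `X`. -/
def IsQUltra {X : Type*} (d : X → X → ℚ≥0) : Prop :=
  (∀ x y, d x y = 0 ↔ x = y) ∧ (∀ x y, d x y = d y x) ∧
  (∀ x y z, d x z ≤ max (d x y) (d y z))

-- auxiliary development

def Dset (f g : Qpos → ℚ) : Set ℚ≥0 := {r : ℚ≥0 | ∃ hr : 0 < r, f ⟨r, hr⟩ ≠ g ⟨r, hr⟩}

lemma qdist_eq_of_isGreatest {f g : Qpos → ℚ} {m : ℚ≥0} (h : IsGreatest (Dset f g) m) :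
    qdist f g = m := by
  unfold qdist
  rw [dif_pos ⟨m, h⟩]
  exact (Exists.choose_spec (⟨m, h⟩ : ∃ m, IsGreatest (Dset f g) m)).unique h

lemma qdist_eq_zero_of_eq {f g : Qpos → ℚ} (h : f = g) : qdist f g = 0 := by
  unfold qdist
  rw [dif_neg]
  rintro ⟨m, ⟨hr, hne⟩, -⟩
  exact hne (by rw [h])

def P (f g : Qpos → ℚ) (δ : ℚ≥0) : Prop :=
  (δ = 0 → f = g) ∧ (δ ≠ 0 → IsGreatest (Dset f g) δ)

lemma qdist_eq_of_P {f g : Qpos → ℚ} {δ : ℚ≥0} (h : P f g δ) : qdist f g = δ := by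
  by_cases h0 : δ = 0
  · rw [h0]; exact qdist_eq_zero_of_eq (h.1 h0)
  · exact qdist_eq_of_isGreatest (h.2 h0)

lemma Dset_comm (f g : Qpos → ℚ) : Dset f g = Dset g f := by
  ext r; exact exists_congr fun hr => ne_comm

lemma P_symm {f g : Qpos → ℚ} {δ : ℚ≥0} (h : P f g δ) : P g f δ :=
  ⟨fun h0 => (h.1 h0).symm, fun h0 => Dset_comm g f ▸ h.2 h0⟩

lemma P.eq_of_gt {f g : Qpos → ℚ} {δ : ℚ≥0} (h : P f g δ) (r : Qpos) (hr : δ < r.1) :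
    f r = g r := by
  by_cases h0 : δ = 0
  · rw [h.1 h0]
  · by_contra hne
    exact absurd ((h.2 h0).2 ⟨r.2, hne⟩) (not_le.mpr hr)

lemma P.ne_at {f g : Qpos → ℚ} {δ : ℚ≥0} (h : P f g δ) (h0 : 0 < δ) :
    f ⟨δ, h0⟩ ≠ g ⟨δ, h0⟩ := by
  obtain ⟨hδ, hne⟩ := (h.2 h0.ne').1
  exact hne

section Construction

variable {X : Type*} (x : ℕ → X) (d : X → X → ℚ≥0)

lemma exists_mIdx (n : ℕ) : ∃ m ∈ Finset.range (n+1),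
    ∀ k ∈ Finset.range (n+1), d (x m) (x (n+1)) ≤ d (x k) (x (n+1)) :=
  Finset.exists_min_image _ _ ⟨0, Finset.mem_range.mpr (Nat.succ_pos n)⟩

def mIdx (n : ℕ) : ℕ := (exists_mIdx x d n).choose

lemma mIdx_lt (n : ℕ) : mIdx x d n < n + 1 :=
  Finset.mem_range.mp (exists_mIdx x d n).choose_spec.1

lemma mIdx_min (n : ℕ) {k : ℕ} (hk : k < n + 1) :
    d (x (mIdx x d n)) (x (n+1)) ≤ d (x k) (x (n+1)) :=
  (exists_mIdx x d n).choose_spec.2 k (Finset.mem_range.mpr hk)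

def F : ℕ → Qpos → ℚ
  | 0 => fun _ => 0
  | n+1 => fun r =>
      if d (x (mIdx x d n)) (x (n+1)) < r.1 then
        F (mIdx x d n) r
      else if r.1 = d (x (mIdx x d n)) (x (n+1)) then
        Classical.choose (Infinite.exists_notMem_finset
          (insert (0:ℚ) (Finset.image (fun j : Fin (n+1) => F j.1 r) Finset.univ)))
      else 0
termination_by n => n
decreasing_by
  all_goals first
    | exact mIdx_lt x d n
    | exact j.2

lemma F_succ_of_lt (n : ℕ) (r : Qpos) (h : d (x (mIdx x d n)) (x (n+1)) < r.1) :
    F x d (n+1) r = F x d (mIdx x d n) r := by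
  simp only [F]
  rw [if_pos h]

lemma F_succ_fresh (n : ℕ) (r : Qpos) (h : r.1 = d (x (mIdx x d n)) (x (n+1))) :
    F x d (n+1) r ∉
      insert (0:ℚ) (Finset.image (fun j : Fin (n+1) => F x d j.1 r) Finset.univ) := by
  simp only [F]
  rw [if_neg (by rw [← h]; exact lt_irrefl _), if_pos h]
  exact Classical.choose_spec (Infinite.exists_notMem_finset _)

lemma F_succ_zero (n : ℕ) (r : Qpos) (h1 : ¬ d (x (mIdx x d n)) (x (n+1)) < r.1)
    (h2 : r.1 ≠ d (x (mIdx x d n)) (x (n+1))) : F x d (n+1) r = 0 := by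
  simp only [F]
  rw [if_neg h1, if_neg h2]

lemma supp_finite (n : ℕ) : (VSupp (0:ℚ) (F x d n)).Finite := by
  induction n using Nat.strong_induction_on with
  | _ n ih =>
    match n with
    | 0 =>
      convert Set.finite_empty
      ext r; simp [VSupp, F]
    | n+1 =>
      apply Set.Finite.subset
        ((ih (mIdx x d n) (mIdx_lt x d n)).union
          (Set.Subsingleton.finite (s := {r : Qpos | r.1 = d (x (mIdx x d n)) (x (n+1))})
            fun a ha b hb => Subtype.ext (ha.trans hb.symm)))
      intro r hr
      by_cases h1 : d (x (mIdx x d n)) (x (n+1)) < r.1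
      · left; rw [VSupp, Set.mem_setOf_eq, ← F_succ_of_lt x d n r h1]; exact hr
      · by_cases h2 : r.1 = d (x (mIdx x d n)) (x (n+1))
        · right; exact h2
        · exact absurd (F_succ_zero x d n r h1 h2) hr

lemma main (hd : IsQUltra d) (n : ℕ) :
    ∀ k ≤ n, P (F x d k) (F x d n) (d (x k) (x n)) := by
  induction n using Nat.strong_induction_on with
  | _ n ih =>
    -- symmetric version of ih for pairs both ≤ some n' < n
    have ihs : ∀ a b : ℕ, a < n → b < n → P (F x d a) (F x d b) (d (x a) (x b)) := by
      intro a b ha hb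
      rcases le_total a b with h | h
      · exact ih b hb a h
      · have := ih a ha b h
        rw [hd.2.1 (x b) (x a)] at this
        exact P_symm this
    match n with
    | 0 =>
      intro k hk
      interval_cases k
      exact ⟨fun _ => rfl, fun h0 => absurd ((hd.1 _ _).mpr rfl) h0⟩
    | n+1 =>
      intro k hk
      rcases Nat.lt_succ_iff_lt_or_eq.mp (Nat.lt_succ_of_le hk) with hk' | rfl
      swap
      · exact ⟨fun _ => rfl, fun h0 => absurd ((hd.1 _ _).mpr rfl) h0⟩
      -- k ≤ n case
      set m := mIdx x d n with hm
      set ρ := d (x m) (x (n+1)) with hρ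
      set δ := d (x k) (x (n+1)) with hδ
      have hρδ : ρ ≤ δ := mIdx_min x d n hk'
      have hmn : m < n + 1 := mIdx_lt x d n
      have hdkm : d (x k) (x m) ≤ max δ ρ := by
        calc d (x k) (x m) ≤ max (d (x k) (x (n+1))) (d (x (n+1)) (x m)) := hd.2.2 _ _ _
        _ = max δ ρ := by rw [hd.2.1 (x (n+1)) (x m)]
      constructor
      · -- δ = 0 → equal
        intro h0
        have hρ0 : ρ = 0 := le_antisymm (h0 ▸ hρδ) zero_le
        have hkm : d (x k) (x m) = 0 := by
          have := hdkm
          rw [h0, hρ0, max_self] at this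
          exact le_antisymm this zero_le
        have hFkm : F x d k = F x d m := (ihs k m hk' hmn).1 hkm
        funext r
        have hlt : ρ < r.1 := by rw [hρ0]; exact r.2
        rw [F_succ_of_lt x d n r hlt, hFkm]
      · -- δ ≠ 0 → IsGreatest
        intro h0
        have hδpos : 0 < δ := pos_iff_ne_zero.mpr h0
        constructor
        · -- membership : F k δ ≠ F (n+1) δ
          refine ⟨hδpos, ?_⟩
          rcases lt_or_eq_of_le hρδ with hlt | heq
          · rw [F_succ_of_lt x d n ⟨δ, hδpos⟩ hlt]
            have hkm : d (x k) (x m) = δ := by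
              have h1 : d (x k) (x m) ≤ δ := by
                have := hdkm; rwa [max_eq_left hρδ] at this
              have h2 : δ ≤ d (x k) (x m) := by
                have := hd.2.2 (x k) (x m) (x (n+1))
                rw [← hδ, ← hρ] at this
                rcases max_cases (d (x k) (x m)) ρ with ⟨he, _⟩ | ⟨he, hle⟩
                · rwa [he] at this
                · rw [he] at this; exact absurd (lt_of_le_of_lt this hlt) (lt_irrefl _)
              exact le_antisymm h1 h2
            have := (ihs k m hk' hmn)
            rw [hkm] at this
            exact this.ne_at hδpos
          · have hfresh := F_succ_fresh x d n ⟨δ, hδpos⟩ heq.symm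
            simp only [Finset.mem_insert, Finset.mem_image, Finset.mem_univ, true_and,
              not_or, not_exists] at hfresh
            exact hfresh.2 ⟨k, hk'⟩
        · -- upper bound
          rintro r ⟨hrpos, hne⟩
          by_contra hgt
          push_neg at hgt
          have hr' : ρ < r := lt_of_le_of_lt hρδ hgt
          rw [F_succ_of_lt x d n ⟨r, hrpos⟩ hr'] at hne
          have h1 : d (x k) (x m) ≤ δ := by rwa [max_eq_left hρδ] at hdkm
          exact hne ((ihs k m hk' hmn).eq_of_gt ⟨r, hrpos⟩ (lt_of_le_of_lt h1 hgt))

end Construction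

/-- `V_ℚ` is universal for countable `ℚ≥0`-valued ultrametric spaces: every countable
such space embeds isometrically into `V_ℚ`. -/
theorem stmt10 {X : Type*} [Countable X] (d : X → X → ℚ≥0) (hd : IsQUltra d) :
    ∃ e : X → VS ℚ 0, Function.Injective e ∧
      ∀ x y : X, qdist (e x).1 (e y).1 = d x y := by
  cases isEmpty_or_nonempty X with
  | inl h =>
    exact ⟨fun a => isEmptyElim a, fun a => isEmptyElim a, fun a => isEmptyElim a⟩
  | inr h =>
    obtain ⟨g, hg⟩ := exists_surjective_nat X
    have key : ∀ a b : X,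
        P (F g d (Classical.choose (hg a))) (F g d (Classical.choose (hg b))) (d a b) := by
      intro a b
      have ha : g (Classical.choose (hg a)) = a := Classical.choose_spec (hg a)
      have hb : g (Classical.choose (hg b)) = b := Classical.choose_spec (hg b)
      rcases le_total (Classical.choose (hg a)) (Classical.choose (hg b)) with hle | hle
      · have := main g d hd _ _ hle
        rwa [ha, hb] at this
      · have := main g d hd _ _ hle
        rw [ha, hb, hd.2.1 (x := b)] at this
        exact P_symm this
    refine ⟨fun a => ⟨F g d (Classical.choose (hg a)), supp_finite g d _⟩, ?_, ?_⟩
    · intro a b hab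
      have h1 : qdist (F g d (Classical.choose (hg a))) (F g d (Classical.choose (hg b)))
          = d a b := qdist_eq_of_P (key a b)
      have h2 : F g d (Classical.choose (hg a)) = F g d (Classical.choose (hg b)) :=
        congrArg Subtype.val hab
      rw [qdist_eq_zero_of_eq h2] at h1
      exact (hd.1 a b).mp h1.symm
    · intro a b
      exact qdist_eq_of_P (key a b)

end
end

section
/- Let S be a set with a distinguished element 0 ∈ S. Then \bar{\bar{V}}_S is spherically complete: every nonempty family of open balls of \bar{\bar{V}}_S that is linearly ordered by inclusion has nonempty intersection. -/
open scoped NNRat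

noncomputable section

/-- `\bar{\bar{V}}_S`: functions `ℚ^{>0} → S` such that every nonempty subset of the
support has a greatest element. -/
def VSbb (S : Type*) (s₀ : S) : Type _ :=
  {f : Qpos → S //
    ∀ t : Set Qpos, t ⊆ VSupp s₀ f → t.Nonempty → ∃ m ∈ t, ∀ x ∈ t, x ≤ m}

lemma qdist_isGreatest {S : Type*} (f g : Qpos → S)
    (h : ∃ m, IsGreatest {r : ℚ≥0 | ∃ hr : 0 < r, f ⟨r, hr⟩ ≠ g ⟨r, hr⟩} m) :
    IsGreatest {r : ℚ≥0 | ∃ hr : 0 < r, f ⟨r, hr⟩ ≠ g ⟨r, hr⟩} (qdist f g) := by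
  rw [qdist, dif_pos h]
  exact h.choose_spec

lemma qdist_eq_zero {S : Type*} (f g : Qpos → S)
    (h : ∀ r : Qpos, f r = g r) : qdist f g = 0 := by
  rw [qdist, dif_neg]
  rintro ⟨m, ⟨hr, hne⟩, -⟩
  exact hne (h _)

/-- For elements of `VSbb`, if they differ somewhere then the set of differing
coordinates has a greatest element. -/
lemma VSbb.exists_greatest {S : Type*} {s₀ : S} (f g : VSbb S s₀) (r₀ : Qpos)
    (hne : f.1 r₀ ≠ g.1 r₀) :
    ∃ m, IsGreatest {r : ℚ≥0 | ∃ hr : 0 < r, f.1 ⟨r, hr⟩ ≠ g.1 ⟨r, hr⟩} m := by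
  set D : Set Qpos := {r | f.1 r ≠ g.1 r} with hD
  have hDgreat : ∃ m ∈ D, ∀ x ∈ D, x ≤ m := by
    set t : Set Qpos := D ∩ VSupp s₀ f.1 with ht
    set u : Set Qpos := D ∩ VSupp s₀ g.1 with hu
    have hDtu : D ⊆ t ∪ u := by
      intro r hr
      by_cases hf : f.1 r = s₀
      · right
        refine ⟨hr, ?_⟩
        intro hgs
        exact hr (hf.trans hgs.symm)
      · exact Or.inl ⟨hr, hf⟩
    have hr₀D : r₀ ∈ D := hne
    by_cases htne : t.Nonempty
    · obtain ⟨m₁, hm₁t, hm₁⟩ := f.2 t (fun x hx => hx.2) htne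
      by_cases hune : u.Nonempty
      · obtain ⟨m₂, hm₂u, hm₂⟩ := g.2 u (fun x hx => hx.2) hune
        rcases le_total m₁ m₂ with h12 | h21
        · refine ⟨m₂, hm₂u.1, fun x hx => ?_⟩
          rcases hDtu hx with hx' | hx'
          · exact (hm₁ x hx').trans h12
          · exact hm₂ x hx'
        · refine ⟨m₁, hm₁t.1, fun x hx => ?_⟩
          rcases hDtu hx with hx' | hx'
          · exact hm₁ x hx'
          · exact (hm₂ x hx').trans h21
      · refine ⟨m₁, hm₁t.1, fun x hx => ?_⟩
        rcases hDtu hx with hx' | hx'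
        · exact hm₁ x hx'
        · exact absurd ⟨x, hx'⟩ hune
    · obtain ⟨m₂, hm₂u, hm₂⟩ := g.2 u (fun x hx => hx.2)
        (by
          rcases hDtu hr₀D with h | h
          · exact absurd ⟨r₀, h⟩ htne
          · exact ⟨r₀, h⟩)
      refine ⟨m₂, hm₂u.1, fun x hx => ?_⟩
      rcases hDtu hx with hx' | hx'
      · exact absurd ⟨x, hx'⟩ htne
      · exact hm₂ x hx'
  obtain ⟨m, hmD, hm⟩ := hDgreat
  refine ⟨m.1, ⟨m.2, by exact hmD⟩, ?_⟩
  rintro r ⟨hr, hrne⟩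
  exact hm ⟨r, hr⟩ hrne

/-- Characterisation of membership in open balls, for elements of `VSbb`. -/
lemma qdist_lt_iff {S : Type*} {s₀ : S} (f g : VSbb S s₀) (ρ : ℚ≥0) (hρ : 0 < ρ) :
    qdist f.1 g.1 < ρ ↔ ∀ r : Qpos, ρ ≤ r.1 → f.1 r = g.1 r := by
  constructor
  · intro hlt r hr
    by_contra hne
    have hgr := qdist_isGreatest f.1 g.1 (VSbb.exists_greatest f g r hne)
    have : r.1 ≤ qdist f.1 g.1 := hgr.2 ⟨r.2, by simpa using hne⟩
    exact absurd (lt_of_le_of_lt (hr.trans this) hlt) (lt_irrefl _)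
  · intro h
    by_cases hne : ∃ r : Qpos, f.1 r ≠ g.1 r
    · obtain ⟨r₀, hr₀⟩ := hne
      have hgr := qdist_isGreatest f.1 g.1 (VSbb.exists_greatest f g r₀ hr₀)
      obtain ⟨hq, hqne⟩ := hgr.1
      by_contra hle
      exact hqne (h ⟨qdist f.1 g.1, hq⟩ (not_lt.mp hle))
    · push_neg at hne
      rw [qdist_eq_zero f.1 g.1 hne]
      exact hρ

/-- `\bar{\bar{V}}_S` is spherically complete: every nonempty family of open balls
that is linearly ordered by inclusion has nonempty intersection. -/
theorem stmt15 {S : Type*} (s₀ : S) {ι : Type*} [Nonempty ι]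
    (c : ι → VSbb S s₀) (ρ : ι → ℚ≥0) (hρ : ∀ i, 0 < ρ i)
    (hchain : ∀ i j : ι,
      {g : VSbb S s₀ | qdist (c i).1 g.1 < ρ i} ⊆
        {g : VSbb S s₀ | qdist (c j).1 g.1 < ρ j} ∨
      {g : VSbb S s₀ | qdist (c j).1 g.1 < ρ j} ⊆
        {g : VSbb S s₀ | qdist (c i).1 g.1 < ρ i}) :
    (⋂ i : ι, {g : VSbb S s₀ | qdist (c i).1 g.1 < ρ i}).Nonempty := by
  classical
  -- each center is in its own ball
  have hself : ∀ i, qdist (c i).1 (c i).1 < ρ i := fun i => by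
    rw [qdist_eq_zero _ _ (fun _ => rfl)]; exact hρ i
  -- compatibility of the centers at large coordinates
  have compat : ∀ i j : ι, ∀ r : Qpos, ρ i ≤ r.1 → ρ j ≤ r.1 →
      (c i).1 r = (c j).1 r := by
    intro i j r hi hj
    rcases hchain i j with h | h
    · have : qdist (c j).1 (c i).1 < ρ j := h (hself i)
      exact ((qdist_lt_iff (c j) (c i) (ρ j) (hρ j)).mp this r hj).symm
    · have : qdist (c i).1 (c j).1 < ρ i := h (hself j)
      exact (qdist_lt_iff (c i) (c j) (ρ i) (hρ i)).mp this r hi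
  -- the glued function
  set F : Qpos → S := fun r =>
    @dite S (∃ i, ρ i ≤ r.1) (Classical.dec _) (fun h => (c h.choose).1 r)
      (fun _ => s₀) with hF
  have hFeq : ∀ (i : ι) (r : Qpos), ρ i ≤ r.1 → F r = (c i).1 r := by
    intro i r hi
    have hex : ∃ j, ρ j ≤ r.1 := ⟨i, hi⟩
    simp only [hF, dif_pos hex]
    exact compat hex.choose i r hex.choose_spec hi
  -- F satisfies the support condition
  have hFmem : ∀ t : Set Qpos, t ⊆ VSupp s₀ F → t.Nonempty →
      ∃ m ∈ t, ∀ x ∈ t, x ≤ m := by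
    intro t hts ⟨x, hx⟩
    have hxF : F x ≠ s₀ := hts hx
    have hex : ∃ i, ρ i ≤ x.1 := by
      by_contra hne
      simp only [hF, dif_neg hne] at hxF
      exact hxF rfl
    obtain ⟨i, hi⟩ := hex
    set t' : Set Qpos := {y ∈ t | x ≤ y} with ht'
    have ht'sub : t' ⊆ VSupp s₀ (c i).1 := by
      rintro y ⟨hyt, hxy⟩
      have hiy : ρ i ≤ y.1 := hi.trans hxy
      have hFy : F y ≠ s₀ := hts hyt
      show (c i).1 y ≠ s₀
      rwa [← hFeq i y hiy]
    obtain ⟨m, hmt', hm⟩ := (c i).2 t' ht'sub ⟨x, hx, le_refl x⟩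
    refine ⟨m, hmt'.1, fun y hy => ?_⟩
    rcases le_total x y with hxy | hyx
    · exact hm y ⟨hy, hxy⟩
    · exact hyx.trans (hm x ⟨hx, le_refl x⟩)
  refine ⟨⟨F, hFmem⟩, ?_⟩
  refine Set.mem_iInter.mpr ?_
  intro i
  refine (qdist_lt_iff (c i) ⟨F, hFmem⟩ (ρ i) (hρ i)).mpr ?_
  intro r hr
  exact (hFeq i r hr).symm

end
end
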